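/- arXiv:2406.17913 — 2 statements merged into one kernel-verified Lean document; each statement's English description precedes it below -/
import Mathlib

section
/- Let λ ∈ ℝ and let C be a closed piecewise-smooth loop in ℂ \ {±i, ±3i} with winding number 1 around i and around 3i, and winding number 0 around -i and -3i. Suppose x : [0,1] → ℂ \ {0} is a piecewise-smooth curve and t : [0,1] → ℂ parametrizes C, satisfying the ODE 2·x'(s)/x(s) = λi·t'(s)/(t(s)-i) - λi·t'(s)/(t(s)+i) - (1+λi)·t'(s)/(t(s)-3i) - (1-λi)·t'(s)/(t(s)+3i) for all s. Then x(1) = -x(0). -/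
open Complex Set

/-- Holonomy computation: along a loop with winding number 1 around i and 3i and 0 around
-i and -3i, a nonvanishing solution x of the holonomy ODE satisfies x(1) = -x(0). -/
theorem holonomy_is_minus_id (lam : ℝ) (t x t' x' : ℝ → ℂ)
    (ht : ∀ s ∈ Icc (0 : ℝ) 1, HasDerivAt t (t' s) s)
    (hx : ∀ s ∈ Icc (0 : ℝ) 1, HasDerivAt x (x' s) s)
    (ht'c : ContinuousOn t' (Icc 0 1)) (hx'c : ContinuousOn x' (Icc 0 1))
    (hloop : t 1 = t 0)
    (havoid : ∀ s ∈ Icc (0 : ℝ) 1,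
      t s ≠ I ∧ t s ≠ -I ∧ t s ≠ 3 * I ∧ t s ≠ -(3 * I))
    (hx0 : ∀ s ∈ Icc (0 : ℝ) 1, x s ≠ 0)
    (wind_i : (∫ s in (0 : ℝ)..1, t' s / (t s - I)) = 2 * Real.pi * I)
    (wind_3i : (∫ s in (0 : ℝ)..1, t' s / (t s - 3 * I)) = 2 * Real.pi * I)
    (wind_mi : (∫ s in (0 : ℝ)..1, t' s / (t s + I)) = 0)
    (wind_m3i : (∫ s in (0 : ℝ)..1, t' s / (t s + 3 * I)) = 0)
    (hode : ∀ s ∈ Icc (0 : ℝ) 1,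
      2 * x' s / x s =
        (lam : ℂ) * I * t' s / (t s - I) - (lam : ℂ) * I * t' s / (t s + I)
          - (1 + (lam : ℂ) * I) * t' s / (t s - 3 * I)
          - (1 - (lam : ℂ) * I) * t' s / (t s + 3 * I)) :
    x 1 = -x 0 := by
  set f : ℝ → ℂ := fun s => x' s / x s with hf_def
  -- continuity facts
  have hxc : ContinuousOn x (Icc 0 1) := fun s hs =>
    (hx s hs).continuousAt.continuousWithinAt
  have htc : ContinuousOn t (Icc 0 1) := fun s hs =>
    (ht s hs).continuousAt.continuousWithinAt
  have hfc : ContinuousOn f (Icc 0 1) := hx'c.div hxc hx0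
  -- the four winding integrands are continuous, hence integrable
  have hgc : ∀ p : ℂ, (∀ s ∈ Icc (0:ℝ) 1, t s ≠ p) →
      ContinuousOn (fun s => t' s / (t s - p)) (Icc 0 1) := by
    intro p hp
    exact ht'c.div (htc.sub continuousOn_const) (fun s hs => sub_ne_zero.2 (hp s hs))
  have havoid1 : ∀ s ∈ Icc (0:ℝ) 1, t s ≠ I := fun s hs => (havoid s hs).1
  have havoid2 : ∀ s ∈ Icc (0:ℝ) 1, t s ≠ -I := fun s hs => (havoid s hs).2.1
  have havoid3 : ∀ s ∈ Icc (0:ℝ) 1, t s ≠ 3*I := fun s hs => (havoid s hs).2.2.1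
  have havoid4 : ∀ s ∈ Icc (0:ℝ) 1, t s ≠ -(3*I) := fun s hs => (havoid s hs).2.2.2
  have huIcc : uIcc (0:ℝ) 1 = Icc 0 1 := uIcc_of_le zero_le_one
  have hint : ∀ p : ℂ, (∀ s ∈ Icc (0:ℝ) 1, t s ≠ p) →
      IntervalIntegrable (fun s => t' s / (t s - p)) MeasureTheory.volume 0 1 := by
    intro p hp
    exact (hgc p hp).intervalIntegrable_of_Icc zero_le_one
  -- f equals half the combination on Icc
  have hf_eq : ∀ s ∈ Icc (0:ℝ) 1, f s =
      ((lam : ℂ) * I * (t' s / (t s - I)) - (lam : ℂ) * I * (t' s / (t s + I))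
        - (1 + (lam : ℂ) * I) * (t' s / (t s - 3 * I))
        - (1 - (lam : ℂ) * I) * (t' s / (t s + 3 * I))) / 2 := by
    intro s hs
    have h := hode s hs
    have hx0s := hx0 s hs
    simp only [hf_def]
    rw [show x' s / x s = (2 * x' s / x s) / 2 by ring, h]
    ring
  -- compute the total integral of f
  have hmi : (fun s => t' s / (t s + I)) = (fun s => t' s / (t s - (-I))) := by
    funext s; rw [sub_neg_eq_add]
  have hm3i : (fun s => t' s / (t s + 3*I)) = (fun s => t' s / (t s - (-(3*I)))) := by
    funext s; rw [sub_neg_eq_add]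
  have hint1 := hint I havoid1
  have hint2 := hint (-I) havoid2
  have hint3 := hint (3*I) havoid3
  have hint4 := hint (-(3*I)) havoid4
  rw [← hmi] at hint2
  rw [← hm3i] at hint4
  have hFtot : (∫ s in (0:ℝ)..1, f s) = -(Real.pi * I) := by
    rw [intervalIntegral.integral_congr (g := fun s =>
      ((lam : ℂ) * I * (t' s / (t s - I)) - (lam : ℂ) * I * (t' s / (t s + I))
        - (1 + (lam : ℂ) * I) * (t' s / (t s - 3 * I))
        - (1 - (lam : ℂ) * I) * (t' s / (t s + 3 * I))) / 2)
      (fun s hs => hf_eq s (huIcc ▸ hs))]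
    rw [intervalIntegral.integral_div]
    rw [intervalIntegral.integral_sub
      (((hint1.const_mul _).sub (hint2.const_mul _)).sub (hint3.const_mul _))
      (hint4.const_mul _)]
    rw [intervalIntegral.integral_sub ((hint1.const_mul _).sub (hint2.const_mul _))
      (hint3.const_mul _)]
    rw [intervalIntegral.integral_sub (hint1.const_mul _) (hint2.const_mul _)]
    rw [intervalIntegral.integral_const_mul, intervalIntegral.integral_const_mul,
      intervalIntegral.integral_const_mul, intervalIntegral.integral_const_mul]
    rw [wind_i, wind_mi, wind_3i, wind_m3i]
    ring
  -- primitive F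
  set F : ℝ → ℂ := fun u => ∫ s in (0:ℝ)..u, f s with hF_def
  have hFderiv : ∀ s ∈ Ico (0:ℝ) 1, HasDerivWithinAt F (f s) (Ici s) s := by
    intro s hs
    have hs' : s ∈ Icc (0:ℝ) 1 := Ico_subset_Icc_self hs
    have hmem : Icc (0:ℝ) 1 ∈ nhdsWithin s (Ioi s) := by
      apply mem_nhdsWithin.2
      exact ⟨Iio 1, isOpen_Iio, hs.2, fun u hu => ⟨le_of_lt (lt_of_le_of_lt hs.1 hu.2),
        le_of_lt hu.1⟩⟩
    have hintf : IntervalIntegrable f MeasureTheory.volume 0 s := by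
      apply (hfc.mono _).intervalIntegrable
      rw [uIcc_of_le hs.1]
      exact Icc_subset_Icc le_rfl hs'.2
    apply intervalIntegral.integral_hasDerivWithinAt_right hintf
    · exact ⟨Icc 0 1, hmem, (hfc.aestronglyMeasurable measurableSet_Icc)⟩
    · exact (hfc.continuousWithinAt hs').mono_of_mem_nhdsWithin hmem
  -- g := x * exp(-F) has zero right derivative
  have hFc : ContinuousOn F (Icc 0 1) := by
    rw [← huIcc]
    exact intervalIntegral.continuousOn_primitive_interval
      (by rw [huIcc]; exact hfc.integrableOn_Icc)
  have hgderiv : ∀ s ∈ Ico (0:ℝ) 1,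
      HasDerivWithinAt (fun u => x u * Complex.exp (-F u)) 0 (Ici s) s := by
    intro s hs
    have hs' : s ∈ Icc (0:ℝ) 1 := Ico_subset_Icc_self hs
    have h1 : HasDerivWithinAt x (x' s) (Ici s) s := (hx s hs').hasDerivWithinAt
    have h3 := h1.mul (((hFderiv s hs).neg).cexp)
    refine h3.congr_deriv ?_
    have hfx : f s * x s = x' s := div_mul_cancel₀ _ (hx0 s hs')
    linear_combination (-Complex.exp (-F s)) * hfx
  have hgcont : ContinuousOn (fun u => x u * Complex.exp (-F u)) (Icc 0 1) :=
    hxc.mul (hFc.neg.cexp)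
  have key := constant_of_has_deriv_right_zero hgcont hgderiv 1 (right_mem_Icc.2 zero_le_one)
  have hF0 : F 0 = 0 := intervalIntegral.integral_same
  have hF1 : F 1 = -(Real.pi * I) := hFtot
  rw [hF0, hF1, neg_zero, Complex.exp_zero, mul_one] at key
  have hexp : Complex.exp (-(-((Real.pi : ℂ) * I))) = -1 := by
    rw [neg_neg]; exact Complex.exp_pi_mul_I
  rw [hexp] at key
  linear_combination -key
end

section
/- Let f(s) = (1/2)∫_{τ|[0,s]} η, where τ(s) = i - i·e^{is}, s ∈ [0, 2π], is the circle of center i and radius 1 through 0, and η(t) = λi·dt/(t-i) - λi·dt/(t+i) - (1+λi)·dt/(t-3i) - (1-λi)·dt/(t+3i) with λ = log(2)/π. Then f(2π) = -πλ = -log 2, and hence e^{f(2π)} = 1/2. -/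
open Complex

lemma hasDerivAt_cexp_I (s : ℝ) :
    HasDerivAt (fun s : ℝ => Complex.exp (I * s)) (I * Complex.exp (I * s)) s := by
  have h : HasDerivAt (fun z : ℂ => Complex.exp (I * z)) (I * Complex.exp (I * (s:ℂ))) (s : ℂ) := by
    have := (Complex.hasDerivAt_exp (I * (s:ℂ))).comp (s:ℂ)
      ((hasDerivAt_id (s:ℂ)).const_mul I)
    simpa [Function.comp_def, mul_comm] using this
  exact h.comp_ofReal

lemma re_cexp_I (s : ℝ) : (Complex.exp (I * s)).re = Real.cos s := by
  rw [mul_comm]; exact Complex.exp_ofReal_mul_I_re s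

lemma mem_sub (a : ℝ) (ha : 1 < a) (s : ℝ) :
    ((a:ℂ) - Complex.exp (I * s)) ∈ Complex.slitPlane := by
  refine Complex.mem_slitPlane_iff.mpr (Or.inl ?_)
  simp only [Complex.sub_re, re_cexp_I, Complex.ofReal_re]
  nlinarith [Real.cos_le_one s]

lemma mem_add (s : ℝ) : ((2:ℂ) + Complex.exp (I * s)) ∈ Complex.slitPlane := by
  refine Complex.mem_slitPlane_iff.mpr (Or.inl ?_)
  simp only [Complex.add_re, re_cexp_I]
  norm_num
  nlinarith [Real.neg_one_le_cos s]

lemma ne_sub (a : ℝ) (ha : 1 < a) (s : ℝ) : ((a:ℂ) - Complex.exp (I * s)) ≠ 0 :=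
  Complex.slitPlane_ne_zero (mem_sub a ha s)

lemma ne_add (s : ℝ) : ((2:ℂ) + Complex.exp (I * s)) ≠ 0 :=
  Complex.slitPlane_ne_zero (mem_add s)

lemma hasDerivAt_log_sub (a : ℝ) (ha : 1 < a) (s : ℝ) :
    HasDerivAt (fun s : ℝ => Complex.log ((a:ℂ) - Complex.exp (I * s)))
      (((a:ℂ) - Complex.exp (I * s))⁻¹ * (-(I * Complex.exp (I * s)))) s := by
  have h := (Complex.hasDerivAt_log (mem_sub a ha s)).comp s
    ((hasDerivAt_const s ((a:ℂ))).sub (hasDerivAt_cexp_I s))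
  simpa [Function.comp_def] using h

lemma hasDerivAt_log_add (s : ℝ) :
    HasDerivAt (fun s : ℝ => Complex.log ((2:ℂ) + Complex.exp (I * s)))
      (((2:ℂ) + Complex.exp (I * s))⁻¹ * (I * Complex.exp (I * s))) s := by
  have h := (Complex.hasDerivAt_log (mem_add s)).comp s
    ((hasDerivAt_const s ((2:ℂ))).add (hasDerivAt_cexp_I s))
  simpa [Function.comp_def] using h

/-- Along the circle τ(s) = i - i e^{is} (with τ'(s) = e^{is}), the function
f(2π) = (1/2)∫_τ η equals -log 2, hence e^{f(2π)} = 1/2 (λ = log 2 / π). -/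
theorem f_two_pi :
    (1 / 2 : ℂ) * (∫ s in (0 : ℝ)..(2 * Real.pi),
        ((((Real.log 2 / Real.pi : ℝ) : ℂ) * I /
            ((Complex.I - Complex.I * Complex.exp (Complex.I * s)) - I)
          - ((Real.log 2 / Real.pi : ℝ) : ℂ) * I /
            ((Complex.I - Complex.I * Complex.exp (Complex.I * s)) + I)
          - (1 + ((Real.log 2 / Real.pi : ℝ) : ℂ) * I) /
            ((Complex.I - Complex.I * Complex.exp (Complex.I * s)) - 3 * I)
          - (1 - ((Real.log 2 / Real.pi : ℝ) : ℂ) * I) /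
            ((Complex.I - Complex.I * Complex.exp (Complex.I * s)) + 3 * I))
          * Complex.exp (Complex.I * s)))
      = -((Real.log 2 : ℝ) : ℂ) ∧
    Complex.exp (-((Real.log 2 : ℝ) : ℂ)) = 1 / 2 := by
  set l : ℂ := ((Real.log 2 / Real.pi : ℝ) : ℂ) with hl
  set F : ℝ → ℂ := fun s => -l * s
      - l * I * Complex.log ((2:ℂ) - Complex.exp (I * s))
      - (1 + l * I) * Complex.log ((2:ℂ) + Complex.exp (I * s))
      - (1 - l * I) * Complex.log ((4:ℂ) - Complex.exp (I * s)) with hF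
  have hderiv : ∀ s : ℝ, HasDerivAt F
      ((l * I / ((Complex.I - Complex.I * Complex.exp (Complex.I * s)) - I)
        - l * I / ((Complex.I - Complex.I * Complex.exp (Complex.I * s)) + I)
        - (1 + l * I) / ((Complex.I - Complex.I * Complex.exp (Complex.I * s)) - 3 * I)
        - (1 - l * I) / ((Complex.I - Complex.I * Complex.exp (Complex.I * s)) + 3 * I))
        * Complex.exp (Complex.I * s)) s := by
    intro s
    have h0 : HasDerivAt (fun s : ℝ => -l * (s:ℂ)) (-l) s := by
      simpa using (Complex.ofRealCLM.hasDerivAt (x := s)).const_mul (-l)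
    have h2 := (hasDerivAt_log_sub 2 (by norm_num) s).const_mul (l * I)
    have h3 := (hasDerivAt_log_add s).const_mul (1 + l * I)
    have h4 := (hasDerivAt_log_sub 4 (by norm_num) s).const_mul (1 - l * I)
    have h := ((h0.sub h2).sub h3).sub h4
    refine h.congr_deriv ?_
    set e := Complex.exp (I * (s:ℂ)) with he
    have hene : e ≠ 0 := Complex.exp_ne_zero _
    have hd1 : Complex.I - Complex.I * e - I = -(I * e) := by ring
    have hd2 : Complex.I - Complex.I * e + I = I * ((2:ℂ) - e) := by ring
    have hd3 : Complex.I - Complex.I * e - 3 * I = -(I * ((2:ℂ) + e)) := by ring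
    have hd4 : Complex.I - Complex.I * e + 3 * I = I * ((4:ℂ) - e) := by ring
    rw [hd1, hd2, hd3, hd4]
    have h2n := ne_sub 2 (by norm_num) s
    have h4n := ne_sub 4 (by norm_num) s
    have h3n := ne_add s
    rw [← he] at h2n h3n h4n
    push_cast at h2 h4 h2n h4n ⊢
    simp only [div_eq_mul_inv, mul_inv, inv_neg, Complex.inv_I]
    have hI3 : (I:ℂ)^3 = -I := by rw [pow_succ, Complex.I_sq]; ring
    have hI4 : (I:ℂ)^4 = 1 := by rw [show (4:ℕ) = 2+2 from rfl, pow_add, Complex.I_sq]; ring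
    field_simp
    ring_nf
    simp only [Complex.I_sq, hI3, hI4]
    ring
  have hcont : Continuous (fun s : ℝ =>
      ((l * I / ((Complex.I - Complex.I * Complex.exp (Complex.I * s)) - I)
        - l * I / ((Complex.I - Complex.I * Complex.exp (Complex.I * s)) + I)
        - (1 + l * I) / ((Complex.I - Complex.I * Complex.exp (Complex.I * s)) - 3 * I)
        - (1 - l * I) / ((Complex.I - Complex.I * Complex.exp (Complex.I * s)) + 3 * I))
        * Complex.exp (Complex.I * s))) := by
    have he : Continuous fun s : ℝ => Complex.exp (I * (s:ℂ)) := by fun_prop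
    refine Continuous.mul ?_ he
    have c1 : ∀ s : ℝ, (Complex.I - Complex.I * Complex.exp (Complex.I * s)) - I ≠ 0 := by
      intro s
      have : Complex.I - Complex.I * Complex.exp (Complex.I * s) - I
          = -(I * Complex.exp (I * s)) := by ring
      rw [this]
      simp [Complex.exp_ne_zero, Complex.I_ne_zero]
    have c2 : ∀ s : ℝ, (Complex.I - Complex.I * Complex.exp (Complex.I * s)) + I ≠ 0 := by
      intro s
      have : Complex.I - Complex.I * Complex.exp (Complex.I * s) + I
          = I * ((2:ℂ) - Complex.exp (I * s)) := by ring
      rw [this]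
      exact mul_ne_zero Complex.I_ne_zero (ne_sub 2 (by norm_num) s)
    have c3 : ∀ s : ℝ, (Complex.I - Complex.I * Complex.exp (Complex.I * s)) - 3 * I ≠ 0 := by
      intro s
      have : Complex.I - Complex.I * Complex.exp (Complex.I * s) - 3 * I
          = -(I * ((2:ℂ) + Complex.exp (I * s))) := by ring
      rw [this]
      exact neg_ne_zero.mpr (mul_ne_zero Complex.I_ne_zero (ne_add s))
    have c4 : ∀ s : ℝ, (Complex.I - Complex.I * Complex.exp (Complex.I * s)) + 3 * I ≠ 0 := by
      intro s
      have : Complex.I - Complex.I * Complex.exp (Complex.I * s) + 3 * I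
          = I * ((4:ℂ) - Complex.exp (I * s)) := by ring
      rw [this]
      exact mul_ne_zero Complex.I_ne_zero (ne_sub 4 (by norm_num) s)
    refine Continuous.sub (Continuous.sub (Continuous.sub ?_ ?_) ?_) ?_
    · exact Continuous.div continuous_const (by fun_prop) c1
    · exact Continuous.div continuous_const (by fun_prop) c2
    · exact Continuous.div continuous_const (by fun_prop) c3
    · exact Continuous.div continuous_const (by fun_prop) c4
  have hint := intervalIntegral.integral_eq_sub_of_hasDerivAt
    (fun s _ => hderiv s) (hcont.intervalIntegrable 0 (2 * Real.pi))
  constructor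
  · rw [hint]
    have e1 : Complex.exp (I * ((2 * Real.pi : ℝ) : ℂ)) = 1 := by
      rw [show I * ((2 * Real.pi : ℝ) : ℂ) = 2 * (Real.pi : ℂ) * I by push_cast; ring]
      exact Complex.exp_two_pi_mul_I
    have e0 : Complex.exp (I * ((0:ℝ) : ℂ)) = 1 := by norm_num
    have hdiff : F (2 * Real.pi) - F 0 = -l * ((2 * Real.pi : ℝ) : ℂ) := by
      simp only [hF, e1, e0]
      push_cast
      ring
    rw [hdiff, hl]
    have hpi : (Real.pi : ℂ) ≠ 0 := by exact_mod_cast Real.pi_ne_zero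
    push_cast
    field_simp
  · rw [Complex.exp_neg, ← Complex.ofReal_exp, Real.exp_log two_pos]
    norm_num
end
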